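/- arXiv:1904.09885 — 4 statements merged into one kernel-verified Lean document; each statement's English description precedes it below -/
import Mathlib

section
/- With A = sP⁻ - J⁻ = sP⁺ - J⁺ and B determined by the Rankine–Hugoniot conditions, the function f(P) = P^γ - (As + B) + A²/P can be rewritten purely in terms of P⁺, P⁻ as f(P) = P^γ + (P⁻P⁺/P)·((P⁺)^γ - (P⁻)^γ)/(P⁺ - P⁻) - ((P⁺)^{γ+1} - (P⁻)^{γ+1})/(P⁺ - P⁻). -/
theorem stmt_3 (γ s Pp Pm Jp Jm A B : ℝ)
    (hγ : 1 ≤ γ) (hPp : 0 < Pp) (hPm : 0 < Pm) (hne : Pp ≠ Pm)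
    (hRH1 : Jp - Jm = s * (Pp - Pm))
    (hRH2 : Jp ^ 2 / Pp + Pp ^ γ - Jm ^ 2 / Pm - Pm ^ γ = s * (Jp - Jm))
    (hA : A = s * Pm - Jm)
    (hB : B = -s * Jm + Jm ^ 2 / Pm + Pm ^ γ) :
    ∀ P : ℝ, 0 < P →
      P ^ γ - (A * s + B) + A ^ 2 / P
        = P ^ γ + (Pm * Pp / P) * ((Pp ^ γ - Pm ^ γ) / (Pp - Pm))
            - (Pp ^ (γ + 1) - Pm ^ (γ + 1)) / (Pp - Pm) := by
  intro P hP
  have hD : Pp - Pm ≠ 0 := sub_ne_zero.mpr hne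
  have hJm : Jm = s * Pm - A := by linarith
  have hJp : Jp = s * Pp - A := by linarith
  subst hJm hJp hB
  have hx : Pp ^ (γ + 1) = Pp ^ γ * Pp := Real.rpow_add_one hPp.ne' γ
  have hy : Pm ^ (γ + 1) = Pm ^ γ * Pm := Real.rpow_add_one hPm.ne' γ
  have h2 := hRH2
  field_simp at h2
  have key : A ^ 2 * (Pp - Pm) = (Pp ^ γ - Pm ^ γ) * (Pm * Pp) := by
    linear_combination -h2
  have hA2 : A ^ 2 = (Pp ^ γ - Pm ^ γ) * (Pm * Pp) / (Pp - Pm) :=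
    (eq_div_iff hD).mpr key
  have hAsB : A * s + (-s * (s * Pm - A) + (s * Pm - A) ^ 2 / Pm + Pm ^ γ)
      = A ^ 2 / Pm + Pm ^ γ := by
    field_simp
    ring
  rw [hx, hy, hAsB, hA2]
  field_simp
  ring
end

section
/- For a positive smooth function ρ, the Bohm potential term satisfies the conservative form identity ρ·((√ρ)''/√ρ)' = (1/2)·(ρ·(ln ρ)'')'. -/
/-!
Write ρ = e^u with u = log ρ, so that √ρ = e^{u/2}. For any v, (e^v)''/e^v = v'' + v'², hence
(√ρ)''/√ρ = u''/2 + u'²/4. Differentiating, the left side becomes ρ (u''' + u' u'')/2, and so does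
the right side (ρ u'')'/2 = (ρ' u'' + ρ u''')/2 because ρ' = ρ u'.
-/

section

variable {u : ℝ → ℝ}

lemma deriv_exp_comp (hu : Differentiable ℝ u) :
    deriv (fun z => Real.exp (u z)) = fun z => Real.exp (u z) * deriv u z :=
  funext fun z => deriv_exp (hu z)

lemma deriv_deriv_exp_comp (hu : Differentiable ℝ u) (hu' : Differentiable ℝ (deriv u)) :
    deriv (deriv (fun z => Real.exp (u z))) =
      fun z => Real.exp (u z) * (deriv (deriv u) z + deriv u z ^ 2) := by
  rw [deriv_exp_comp hu]
  funext z
  rw [deriv_fun_mul (hu z).exp (hu' z), deriv_exp (hu z)]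
  ring

lemma deriv_deriv_exp_comp_div_exp (hu : Differentiable ℝ u)
    (hu' : Differentiable ℝ (deriv u)) :
    (fun z => deriv (deriv (fun z => Real.exp (u z))) z / Real.exp (u z)) =
      fun z => deriv (deriv u) z + deriv u z ^ 2 := by
  rw [deriv_deriv_exp_comp hu hu']
  funext z
  field_simp

theorem exp_mul_deriv_bohm_potential (hu : ContDiff ℝ 3 u) (x : ℝ) :
    Real.exp (u x) *
        deriv (fun y => deriv (deriv (fun z => Real.exp (u z / 2))) y / Real.exp (u y / 2)) x
      = 1 / 2 * deriv (fun y => Real.exp (u y) * deriv (deriv u) y) x := by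
  have hu₁ : Differentiable ℝ u := hu.differentiable (by norm_num)
  have hu₂ : Differentiable ℝ (deriv u) := (hu.deriv' (n := 2)).differentiable (by norm_num)
  have hu₃ : Differentiable ℝ (deriv (deriv u)) :=
    ((hu.deriv' (n := 2)).deriv' (n := 1)).differentiable (by norm_num)
  have hhalf : deriv (fun z => u z / 2) = fun z => deriv u z / 2 :=
    funext fun z => deriv_div_const 2
  have hquot := deriv_deriv_exp_comp_div_exp (u := fun z => u z / 2)
    (hu₁.div_const 2) (by rw [hhalf]; exact hu₂.div_const 2)
  simp only [hhalf, deriv_div_const] at hquot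
  have hleft := ((hu₃ x).hasDerivAt.div_const 2).fun_add
    (((hu₂ x).hasDerivAt.div_const 2).fun_pow 2)
  rw [hquot, hleft.deriv, deriv_fun_mul (hu₁ x).exp (hu₃ x), deriv_exp (hu₁ x)]
  push_cast
  ring

end

theorem stmt_7 (ρ : ℝ → ℝ) (hρ : ContDiff ℝ 3 ρ) (hpos : ∀ x, 0 < ρ x) :
    ∀ x : ℝ,
      ρ x * deriv (fun y => deriv (deriv (fun z => Real.sqrt (ρ z))) y
              / Real.sqrt (ρ y)) x
        = (1 / 2) * deriv (fun y =>
            ρ y * deriv (deriv (fun z => Real.log (ρ z))) y) x := by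
  obtain ⟨u, hu, rfl⟩ : ∃ u : ℝ → ℝ, ContDiff ℝ 3 u ∧ ρ = fun z => Real.exp (u z) :=
    ⟨fun z => Real.log (ρ z), hρ.log fun z => (hpos z).ne',
      funext fun z => (Real.exp_log (hpos z)).symm⟩
  simp only [← Real.exp_half, Real.log_exp]
  exact exp_mul_deriv_bohm_potential hu
end

section
/- If ξ is a nonzero real number, and α ≤ 0, μ > 0, k > 0, β ∈ ℝ, then any root λ of the dispersion relation λ² + ξ(μξ - iβ)λ + ξ²(-α + k²ξ²/2) = 0 satisfies Re(λ) < 0; in particular no root lies in the closed right half-plane except possibly when ξ = 0. -/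
theorem stmt_8 (α β μ k ξ : ℝ) (hα : α ≤ 0) (hμ : 0 < μ) (hk : 0 < k)
    (hξ : ξ ≠ 0) (lam : ℂ)
    (hroot : lam ^ 2 + (ξ : ℂ) * ((μ : ℂ) * ξ - Complex.I * β) * lam
        + (ξ : ℂ) ^ 2 * (-(α : ℂ) + (k : ℂ) ^ 2 * (ξ : ℂ) ^ 2 / 2) = 0) :
    lam.re < 0 := by
  by_contra h
  push_neg at h
  set x := lam.re with hx
  set y := lam.im with hy
  have hre := congrArg Complex.re hroot
  have him := congrArg Complex.im hroot
  simp [Complex.add_re, Complex.add_im, Complex.mul_re, Complex.mul_im, pow_two,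
    Complex.sub_re, Complex.sub_im, Complex.I_re, Complex.I_im, Complex.div_re,
    Complex.div_im, Complex.ofReal_re, Complex.ofReal_im, Complex.normSq] at hre him
  set a := μ * ξ ^ 2 with hA
  set b := β * ξ with hB
  set c := ξ ^ 2 * (-α + k ^ 2 * ξ ^ 2 / 2) with hC
  have hxi2 : 0 < ξ ^ 2 := by positivity
  have ha : 0 < a := by positivity
  have hc : 0 < c := by
    have : 0 < -α + k ^ 2 * ξ ^ 2 / 2 := by nlinarith [mul_pos (pow_pos hk 2) hxi2]
    exact mul_pos hxi2 this
  have E1 : x ^ 2 - y ^ 2 + a * x + b * y + c = 0 := by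
    rw [hA, hB, hC]; linear_combination hre
  have E2 : 2 * x * y + a * y - b * x = 0 := by
    rw [hA, hB]; linear_combination him
  have key : (x ^ 2 + a * x + c) * (2 * x + a) ^ 2 + b ^ 2 * x * (x + a) = 0 := by
    linear_combination (2 * x + a) ^ 2 * E1 + (y * (2 * x + a) + b * x - b * (2 * x + a)) * E2
  have h1 : 0 < x ^ 2 + a * x + c := by nlinarith
  have h2 : 0 < (2 * x + a) ^ 2 := by positivity
  nlinarith [mul_pos h1 h2, mul_nonneg (mul_nonneg (sq_nonneg b) h) (by linarith : (0:ℝ) ≤ x + a)]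
end

section
/- Energy identity: under the resolvent equations λρ̃ = -J̃' + f₁ and λJ̃ = αρ̃' + βJ̃' + μJ̃'' + (k²/2)ρ̃''' + f₂ with sufficiently regular decaying solutions, one has Re(λ)(-α∫|ρ̃|² + ∫|J̃|² + (k²/2)∫|ρ̃'|²) + μ∫|J̃'|² = ∫Re(-α f₁ conj(ρ̃) + f₂ conj(J̃)) + (k²/2)∫Re(f₁' conj(ρ̃')). -/
open MeasureTheory Filter

/-- Membership in the Sobolev space `H^k(ℝ, ℂ)`. -/
def MemH (k : ℕ) (f : ℝ → ℂ) : Prop :=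
  ContDiff ℝ k f ∧ ∀ i ≤ k, MemLp (iteratedDeriv i f) 2 volume

/-!
Pair the first equation with `ρ̄`, its derivative with `ρ̄'` and the second equation with `J̄`, and
take real parts. Pointwise, the combination `-α·(1st) + (k²/2)·(1st)' + (2nd)` equals the forcing
terms plus `μ |J'|²` plus the real part of the derivative of the flux
`α J ρ̄ + (β/2) |J|² + μ J' J̄ + (k²/2)(ρ'' J̄ - J' ρ̄')`. Each product `u w̄` in the flux has
`u, w ∈ H¹`, so it and its derivative are integrable and the derivative integrates to zero.
-/

open ComplexConjugate

theorem MeasureTheory.MemLp.integrable_sq_norm {X E : Type*} [MeasurableSpace X] {m : Measure X}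
    [NormedAddCommGroup E] {f : X → E} (hf : MemLp f 2 m) :
    Integrable (fun x => ‖f x‖ ^ 2) m :=
  (memLp_two_iff_integrable_sq_norm hf.1).1 hf

theorem MeasureTheory.MemLp.integrable_mul_conj {X 𝕜 : Type*} [MeasurableSpace X] {m : Measure X}
    [RCLike 𝕜] {f g : X → 𝕜} (hf : MemLp f 2 m) (hg : MemLp g 2 m) :
    Integrable (fun x => f x * conj (g x)) m :=
  hf.integrable_mul hg.star

theorem MeasureTheory.integral_complex_re {X : Type*} [MeasurableSpace X] {m : Measure X}
    {f : X → ℂ} (hf : Integrable f m) : ∫ x, (f x).re ∂m = (∫ x, f x ∂m).re :=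
  integral_re hf

theorem HasDerivAt.mul_conj {u w : ℝ → ℂ} {u' w' : ℂ} {x : ℝ} (hu : HasDerivAt u u' x)
    (hw : HasDerivAt w w' x) :
    HasDerivAt (fun x => u x * conj (w x)) (u' * conj (w x) + u x * conj w') x :=
  hu.mul hw.star

namespace MemH

variable {n : ℕ} {f : ℝ → ℂ}

theorem memLp (hf : MemH n f) : MemLp f 2 volume := by
  simpa using hf.2 0 n.zero_le

theorem differentiable (hf : MemH (n + 1) f) : Differentiable ℝ f :=
  hf.1.differentiable (by simp)

theorem deriv (hf : MemH (n + 1) f) : MemH n (deriv f) := by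
  refine ⟨(contDiff_succ_iff_deriv.mp (by exact_mod_cast hf.1)).2.2, fun i hi => ?_⟩
  rw [← iteratedDeriv_succ']
  exact hf.2 (i + 1) (by omega)

theorem mono {m : ℕ} (hf : MemH n f) (hmn : m ≤ n) : MemH m f :=
  ⟨hf.1.of_le (by exact_mod_cast hmn), fun i hi => hf.2 i (hi.trans hmn)⟩

end MemH

noncomputable def derivMulConj (u w : ℝ → ℂ) (x : ℝ) : ℂ :=
  deriv u x * conj (w x) + u x * conj (deriv w x)

section derivMulConj

variable {u w : ℝ → ℂ}

theorem MemH.integrable_derivMulConj (hu : MemH 1 u) (hw : MemH 1 w) :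
    Integrable (derivMulConj u w) volume :=
  (hu.deriv.memLp.integrable_mul_conj hw.memLp).add (hu.memLp.integrable_mul_conj hw.deriv.memLp)

theorem MemH.integral_derivMulConj_eq_zero (hu : MemH 1 u) (hw : MemH 1 w) :
    ∫ x, derivMulConj u w x = 0 :=
  integral_eq_zero_of_hasDerivAt_of_integrable
    (fun x => (hu.differentiable x).hasDerivAt.mul_conj (hw.differentiable x).hasDerivAt)
    (hu.integrable_derivMulConj hw) (hu.memLp.integrable_mul_conj hw.memLp)

end derivMulConj

/-- The derivative of the flux `α J ρ̄ + (β/2) |J|² + μ J' J̄ + κ (ρ'' J̄ - J' ρ̄')`. -/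
noncomputable def energyFluxDeriv (α β μ κ : ℝ) (ρ J : ℝ → ℂ) (x : ℝ) : ℂ :=
  α * derivMulConj J ρ x + (β / 2 : ℝ) * derivMulConj J J x + μ * derivMulConj (deriv J) J x
    + κ * (derivMulConj (deriv (deriv ρ)) J x - derivMulConj (deriv J) (deriv ρ) x)

section energyFluxDeriv

variable (α β μ κ : ℝ) {ρ J : ℝ → ℂ}

theorem integrable_energyFluxDeriv (hρ : MemH 3 ρ) (hJ : MemH 2 J) :
    Integrable (energyFluxDeriv α β μ κ ρ J) volume := by
  have hρ₁ : MemH 1 ρ := hρ.mono (by norm_num)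
  have hJ₁ : MemH 1 J := hJ.mono (by norm_num)
  have hρ'₁ : MemH 1 (deriv ρ) := hρ.deriv.mono (by norm_num)
  have := hJ₁.integrable_derivMulConj hρ₁
  have := hJ₁.integrable_derivMulConj hJ₁
  have := hJ.deriv.integrable_derivMulConj hJ₁
  have := hρ.deriv.deriv.integrable_derivMulConj hJ₁
  have := hJ.deriv.integrable_derivMulConj hρ'₁
  unfold energyFluxDeriv
  fun_prop

theorem integral_energyFluxDeriv_eq_zero (hρ : MemH 3 ρ) (hJ : MemH 2 J) :
    ∫ x, energyFluxDeriv α β μ κ ρ J x = 0 := by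
  have hρ₁ : MemH 1 ρ := hρ.mono (by norm_num)
  have hJ₁ : MemH 1 J := hJ.mono (by norm_num)
  have hρ'₁ : MemH 1 (deriv ρ) := hρ.deriv.mono (by norm_num)
  have := hJ₁.integrable_derivMulConj hρ₁
  have := hJ₁.integrable_derivMulConj hJ₁
  have := hJ.deriv.integrable_derivMulConj hJ₁
  have := hρ.deriv.deriv.integrable_derivMulConj hJ₁
  have := hJ.deriv.integrable_derivMulConj hρ'₁
  unfold energyFluxDeriv
  rw [integral_add (by fun_prop) (by fun_prop), integral_add (by fun_prop) (by fun_prop),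
    integral_add (by fun_prop) (by fun_prop), integral_const_mul, integral_const_mul,
    integral_const_mul, integral_const_mul, integral_sub (by fun_prop) (by fun_prop),
    hJ₁.integral_derivMulConj_eq_zero hρ₁, hJ₁.integral_derivMulConj_eq_zero hJ₁,
    hJ.deriv.integral_derivMulConj_eq_zero hJ₁, hρ.deriv.deriv.integral_derivMulConj_eq_zero hJ₁,
    hJ.deriv.integral_derivMulConj_eq_zero hρ'₁]
  simp

end energyFluxDeriv

/-- `r, r₁, r₂, r₃` stand for `ρ, ρ', ρ'', ρ'''` at a point, `j, j₁, j₂` for `J, J', J''` and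
`g₁, g₁', g₂` for `f₁, f₁', f₂`. -/
theorem re_energy_balance {α β μ κ : ℝ} {lam r r₁ r₂ r₃ j j₁ j₂ g₁ g₁' g₂ : ℂ}
    (h₁ : lam * r = -j₁ + g₁) (h₁' : lam * r₁ = -j₂ + g₁')
    (h₂ : lam * j = α * r₁ + β * j₁ + μ * j₂ + κ * r₃ + g₂) :
    lam.re * (-α * ‖r‖ ^ 2 + ‖j‖ ^ 2 + κ * ‖r₁‖ ^ 2) + μ * ‖j₁‖ ^ 2
      = (-(α : ℂ) * g₁ * conj r + g₂ * conj j + κ * (g₁' * conj r₁)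
        + (α * (j₁ * conj r + j * conj r₁) + (β / 2 : ℝ) * (j₁ * conj j + j * conj j₁)
          + μ * (j₂ * conj j + j₁ * conj j₁)
          + κ * (r₃ * conj j + r₂ * conj j₁ - (j₂ * conj r₁ + j₁ * conj r₂)))).re := by
  have e₁ := congrArg (fun z => (z * conj r).re) h₁
  have e₁' := congrArg (fun z => (z * conj r₁).re) h₁'
  have e₂ := congrArg (fun z => (z * conj j).re) h₂
  simp only [Complex.sq_norm, Complex.normSq_apply, Complex.add_re, Complex.sub_re,
    Complex.neg_re, Complex.neg_im, Complex.mul_re, Complex.mul_im, Complex.add_im,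
    Complex.sub_im, Complex.conj_re, Complex.conj_im, Complex.ofReal_re, Complex.ofReal_im]
    at e₁ e₁' e₂ ⊢
  linear_combination (-α) * e₁ + κ * e₁' + e₂

theorem stmt_14_general (α β μ k : ℝ) (lam : ℂ)
    (ρ J f1 f2 : ℝ → ℂ)
    (hρ : MemH 3 ρ) (hJ : MemH 2 J) (hf1 : MemH 1 f1)
    (hf2 : MemLp f2 2 volume)
    (heq1 : ∀ y : ℝ, lam * ρ y = -deriv J y + f1 y)
    (heq2 : ∀ y : ℝ, lam * J y
        = (α : ℂ) * deriv ρ y + (β : ℂ) * deriv J y + (μ : ℂ) * deriv (deriv J) y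
          + ((k : ℂ) ^ 2 / 2) * deriv (deriv (deriv ρ)) y + f2 y) :
    lam.re * (-α * (∫ y : ℝ, ‖ρ y‖ ^ 2) + (∫ y : ℝ, ‖J y‖ ^ 2)
          + (k ^ 2 / 2) * (∫ y : ℝ, ‖deriv ρ y‖ ^ 2))
        + μ * (∫ y : ℝ, ‖deriv J y‖ ^ 2)
      = (∫ y : ℝ, (-(α : ℂ) * f1 y * (starRingEnd ℂ) (ρ y)
            + f2 y * (starRingEnd ℂ) (J y)).re)
        + (k ^ 2 / 2) * ∫ y : ℝ, (deriv f1 y * (starRingEnd ℂ) (deriv ρ y)).re := by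
  have heq1' : ∀ y, lam * deriv ρ y = -deriv (deriv J) y + deriv f1 y := fun y =>
    (funext heq1 ▸ (hρ.differentiable y).hasDerivAt.const_mul lam).unique
      ((hJ.deriv.differentiable y).hasDerivAt.neg.add (hf1.differentiable y).hasDerivAt)
  have heq2' : ∀ y, lam * J y = α * deriv ρ y + β * deriv J y + μ * deriv (deriv J) y
      + (k ^ 2 / 2 : ℝ) * deriv (deriv (deriv ρ)) y + f2 y := fun y => by
    rw [heq2 y]; push_cast; ring
  have hbalance : ∀ y, lam.re * (-α * ‖ρ y‖ ^ 2 + ‖J y‖ ^ 2 + k ^ 2 / 2 * ‖deriv ρ y‖ ^ 2)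
      + μ * ‖deriv J y‖ ^ 2 = (-(α : ℂ) * f1 y * conj (ρ y) + f2 y * conj (J y)
        + (k ^ 2 / 2 : ℝ) * (deriv f1 y * conj (deriv ρ y))
        + energyFluxDeriv α β μ (k ^ 2 / 2) ρ J y).re := fun y =>
    re_energy_balance (heq1 y) (heq1' y) (heq2' y)
  have := hρ.memLp.integrable_sq_norm
  have := hJ.memLp.integrable_sq_norm
  have := hρ.deriv.memLp.integrable_sq_norm
  have := hJ.deriv.memLp.integrable_sq_norm
  have := (hf1.memLp.const_mul (-(α : ℂ))).integrable_mul_conj hρ.memLp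
  have := hf2.integrable_mul_conj hJ.memLp
  have := hf1.deriv.memLp.integrable_mul_conj hρ.deriv.memLp
  have := integrable_energyFluxDeriv α β μ (k ^ 2 / 2) hρ hJ
  have hint := integral_congr_ae (μ := volume) (Eventually.of_forall hbalance)
  rw [integral_add (by fun_prop) (by fun_prop), integral_const_mul,
    integral_add (by fun_prop) (by fun_prop), integral_add (by fun_prop) (by fun_prop),
    integral_const_mul, integral_const_mul, integral_const_mul] at hint
  rw [hint, integral_complex_re (by fun_prop), integral_add (by fun_prop) (by fun_prop),
    integral_add (by fun_prop) (by fun_prop), integral_const_mul,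
    integral_energyFluxDeriv_eq_zero α β μ (k ^ 2 / 2) hρ hJ,
    integral_complex_re (by fun_prop), integral_complex_re (by fun_prop)]
  simp only [add_zero, Complex.add_re, Complex.re_ofReal_mul]

theorem stmt_14 (α β μ k : ℝ) (hμ : 0 < μ) (hk : 0 < k) (lam : ℂ)
    (ρ J f1 f2 : ℝ → ℂ)
    (hρ : MemH 3 ρ) (hJ : MemH 2 J) (hf1 : MemH 1 f1)
    (hf2 : MemLp f2 2 volume)
    (heq1 : ∀ y : ℝ, lam * ρ y = -deriv J y + f1 y)
    (heq2 : ∀ y : ℝ, lam * J y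
        = (α : ℂ) * deriv ρ y + (β : ℂ) * deriv J y + (μ : ℂ) * deriv (deriv J) y
          + ((k : ℂ) ^ 2 / 2) * deriv (deriv (deriv ρ)) y + f2 y)
    (hdecayρ : Tendsto ρ (cocompact ℝ) (nhds 0))
    (hdecayρ' : Tendsto (deriv ρ) (cocompact ℝ) (nhds 0))
    (hdecayρ'' : Tendsto (deriv (deriv ρ)) (cocompact ℝ) (nhds 0))
    (hdecayJ : Tendsto J (cocompact ℝ) (nhds 0))
    (hdecayJ' : Tendsto (deriv J) (cocompact ℝ) (nhds 0)) :
    lam.re * (-α * (∫ y : ℝ, ‖ρ y‖ ^ 2) + (∫ y : ℝ, ‖J y‖ ^ 2)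
          + (k ^ 2 / 2) * (∫ y : ℝ, ‖deriv ρ y‖ ^ 2))
        + μ * (∫ y : ℝ, ‖deriv J y‖ ^ 2)
      = (∫ y : ℝ, (-(α : ℂ) * f1 y * (starRingEnd ℂ) (ρ y)
            + f2 y * (starRingEnd ℂ) (J y)).re)
        + (k ^ 2 / 2) * ∫ y : ℝ, (deriv f1 y * (starRingEnd ℂ) (deriv ρ y)).re :=
  stmt_14_general α β μ k lam ρ J f1 f2 hρ hJ hf1 hf2 heq1 heq2
end
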